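/- For the censored Markov chain, the additive functionals are monotone and convergent along each sample path: almost surely _{(n)}ζ_j(|g|)(ω) ≤ _{(n+1)}ζ_j(|g|)(ω) ≤ ζ_j(|g|)(ω) and _{(n)}ζ_j(|g|)(ω) → ζ_j(|g|)(ω) as n → ∞. Hence Assumption 1 holds for censored truncations. -/

import Mathlib

open MeasureTheory Filter Topology

/-- First return time to state `j` along a discrete path (junk value `0` if no return). -/
noncomputable def hitTime (j : ℕ) (ω : ℕ → ℕ) : ℕ := sInf {k | 1 ≤ k ∧ ω k = j}

/-- Additive functional `ζ_j(g)(ω) = ∑_{k=0}^{τ_j-1} g(ω_k)`. -/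
noncomputable def addF (g : ℕ → ℝ) (j : ℕ) (ω : ℕ → ℕ) : ℝ :=
  ∑ k ∈ Finset.range (hitTime j ω), g (ω k)

/-- Matrix powers of a transition kernel on `ℕ`. -/
noncomputable def matPow (P : ℕ → ℕ → ℝ) : ℕ → ℕ → ℕ → ℝ
  | 0 => fun i k => if i = k then 1 else 0
  | n + 1 => fun i k => ∑' m, matPow P n i m * P m k

def MCStochastic (P : ℕ → ℕ → ℝ) : Prop :=
  (∀ i k, 0 ≤ P i k) ∧ ∀ i, HasSum (P i) 1

def MCIrreducible (P : ℕ → ℕ → ℝ) : Prop := ∀ i k, ∃ n, 0 < matPow P n i k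

/-- `μ i` is the law on path space of the Markov chain with kernel `P` started at `i`. -/
def MCChainLaw (P : ℕ → ℕ → ℝ) (μ : ℕ → Measure (ℕ → ℕ)) : Prop :=
  (∀ i, IsProbabilityMeasure (μ i)) ∧
  ∀ i n (s : ℕ → ℕ), s 0 = i →
    μ i {ω | ∀ k ≤ n, ω k = s k} =
      ENNReal.ofReal (∏ k ∈ Finset.range n, P (s k) (s (k + 1)))

/-- Sure return to every state, with finite mean return times. -/
def MCPositiveRecurrent (μ : ℕ → Measure (ℕ → ℕ)) : Prop :=
  ∀ i j, μ i {ω | ∃ k, 1 ≤ k ∧ ω k = j} = 1 ∧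
    Integrable (fun ω => (hitTime j ω : ℝ)) (μ j)

/-- `π` is an invariant probability vector for `P`. -/
def MCInvariant (P : ℕ → ℕ → ℝ) (π : ℕ → ℝ) : Prop :=
  (∀ i, 0 ≤ π i) ∧ HasSum π 1 ∧ ∀ k, HasSum (fun i => π i * P i k) (π k)

/-- The censored (watched) path on `{0,…,n}`: the original path observed only at the
successive times it visits `{0,…,n}`. -/
noncomputable def censor (n : ℕ) (ω : ℕ → ℕ) : ℕ → ℕ :=
  fun k => ω (Nat.nth (fun m => ω m ≤ n) k)

/-!
Fix a path `ω` that starts in `{0,…,n}` and returns to `j ≤ n` at time `T = τ_j`. The censored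
path is `ω ∘ nth (ω · ≤ n)`, so it returns to `j` after exactly `count (ω · ≤ n) T` steps, and its
additive functional is the sum of `G (ω m)` over the visits `m < T` to `{0,…,n}`. These visit sets
increase with `n` and exhaust `[0, T)` as soon as `n ≥ max_{m ≤ T} ω m`; for `G ≥ 0` this gives
the monotonicity, the bounds by the uncensored quantities, and eventual equality. The chain law
and recurrence make `ω 0 = i` and the return to `j` hold almost surely.
-/

namespace Nat

variable {p : ℕ → Prop} [DecidablePred p]

theorem count_nth_of_lt_count {n k : ℕ} (h : k < count p n) : count p (nth p k) = k :=
  count_nth fun hf => h.trans_le (count_le_card hf n)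

theorem sum_range_count_comp_nth {M : Type*} [AddCommMonoid M] (f : ℕ → M) (n : ℕ) :
    ∑ k ∈ Finset.range (count p n), f (nth p k) = ∑ m ∈ Finset.range n with p m, f m := by
  refine Finset.sum_nbij' (nth p) (count p) ?_ ?_ ?_ ?_ fun _ _ => rfl
  · intro k hk
    simp only [Finset.mem_filter, Finset.mem_range] at hk ⊢
    exact ⟨nth_lt_of_lt_count hk, nth_mem k fun hf => hk.trans_le (count_le_card hf n)⟩
  · intro m hm
    simp only [Finset.mem_filter, Finset.mem_range] at hm ⊢
    exact count_strict_mono hm.2 hm.1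
  · intro k hk
    exact count_nth_of_lt_count (Finset.mem_range.1 hk)
  · intro m hm
    simp only [Finset.mem_filter, Finset.mem_range] at hm
    exact nth_count hm.2

end Nat

section HitTime

variable {ω : ℕ → ℕ} {j k : ℕ}

theorem hitTime_le (hk : 1 ≤ k) (hω : ω k = j) : hitTime j ω ≤ k :=
  Nat.sInf_le ⟨hk, hω⟩

theorem hitTime_spec (hret : ∃ k, 1 ≤ k ∧ ω k = j) : 1 ≤ hitTime j ω ∧ ω (hitTime j ω) = j :=
  Nat.sInf_mem hret

theorem hitTime_eq_of (hk : 1 ≤ k) (hω : ω k = j) (hne : ∀ m, 1 ≤ m → m < k → ω m ≠ j) :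
    hitTime j ω = k := by
  obtain ⟨h1, hj⟩ := hitTime_spec ⟨k, hk, hω⟩
  exact (hitTime_le hk hω).antisymm (not_lt.1 fun hlt => hne _ h1 hlt hj)

end HitTime

section Censor

variable {ω : ℕ → ℕ} {j n : ℕ}

theorem hitTime_censor (hret : ∃ k, 1 ≤ k ∧ ω k = j) (hn : max (ω 0) j ≤ n) :
    hitTime j (censor n ω) = Nat.count (fun m => ω m ≤ n) (hitTime j ω) := by
  obtain ⟨hT1, hTj⟩ := hitTime_spec hret
  have h0 : ω 0 ≤ n := le_of_max_le_left hn
  have hpT : ω (hitTime j ω) ≤ n := by rw [hTj]; exact le_of_max_le_right hn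
  apply hitTime_eq_of
  · exact Nat.one_le_of_lt (Nat.count_strict_mono (p := fun m => ω m ≤ n) h0 hT1)
  · rw [censor, Nat.nth_count (p := fun m => ω m ≤ n) hpT, hTj]
  · intro k hk hkc hkj
    have hpos : Nat.nth (fun m => ω m ≤ n) k ≠ 0 := fun h => by
      have := Nat.count_nth_of_lt_count hkc
      rw [h, Nat.count_zero] at this
      omega
    exact (hitTime_le (Nat.one_le_iff_ne_zero.2 hpos) hkj).not_gt (Nat.nth_lt_of_lt_count hkc)

theorem addF_censor (G : ℕ → ℝ) (hret : ∃ k, 1 ≤ k ∧ ω k = j) (hn : max (ω 0) j ≤ n) :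
    addF G j (censor n ω) = ∑ m ∈ Finset.range (hitTime j ω) with ω m ≤ n, G (ω m) := by
  rw [addF, hitTime_censor hret hn]
  exact Nat.sum_range_count_comp_nth (fun m => G (ω m)) _

theorem hitTime_censor_mono {n' : ℕ} (hret : ∃ k, 1 ≤ k ∧ ω k = j) (hn : max (ω 0) j ≤ n)
    (hnn' : n ≤ n') : hitTime j (censor n ω) ≤ hitTime j (censor n' ω) := by
  rw [hitTime_censor hret hn, hitTime_censor hret (hn.trans hnn')]
  exact Nat.count_mono_left fun _ _ h => h.trans hnn'

theorem hitTime_censor_le (hret : ∃ k, 1 ≤ k ∧ ω k = j) (hn : max (ω 0) j ≤ n) :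
    hitTime j (censor n ω) ≤ hitTime j ω := by
  rw [hitTime_censor hret hn]
  exact Nat.count_le _

theorem addF_censor_mono {G : ℕ → ℝ} {n' : ℕ} (hG : ∀ x, 0 ≤ G x)
    (hret : ∃ k, 1 ≤ k ∧ ω k = j) (hn : max (ω 0) j ≤ n) (hnn' : n ≤ n') :
    addF G j (censor n ω) ≤ addF G j (censor n' ω) := by
  rw [addF_censor G hret hn, addF_censor G hret (hn.trans hnn')]
  exact Finset.sum_le_sum_of_subset_of_nonneg
    (Finset.monotone_filter_right _ fun _ _ h => h.trans hnn') fun _ _ _ => hG _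

theorem addF_censor_le {G : ℕ → ℝ} (hG : ∀ x, 0 ≤ G x)
    (hret : ∃ k, 1 ≤ k ∧ ω k = j) (hn : max (ω 0) j ≤ n) :
    addF G j (censor n ω) ≤ addF G j ω := by
  rw [addF_censor G hret hn, addF]
  exact Finset.sum_le_sum_of_subset_of_nonneg (Finset.filter_subset _ _) fun _ _ _ => hG _

theorem eventually_censor_eq (hret : ∃ k, 1 ≤ k ∧ ω k = j) :
    ∀ᶠ n in atTop, hitTime j (censor n ω) = hitTime j ω ∧
      ∀ G : ℕ → ℝ, addF G j (censor n ω) = addF G j ω := by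
  obtain ⟨hT1, hTj⟩ := hitTime_spec hret
  have hbound : ∀ᶠ n in atTop, ∀ m ∈ Finset.Iic (hitTime j ω), ω m ≤ n :=
    (Finset.eventually_all _).2 fun m _ => eventually_ge_atTop (ω m)
  filter_upwards [hbound] with n hbn
  have hle : ∀ m < hitTime j ω, ω m ≤ n := fun m hm => hbn m (Finset.mem_Iic.2 hm.le)
  have hmax : max (ω 0) j ≤ n := max_le (hle 0 hT1) (hTj ▸ hbn _ (Finset.mem_Iic.2 le_rfl))
  refine ⟨?_, fun G => ?_⟩
  · rw [hitTime_censor hret hmax, Nat.count_eq_card_filter_range, Finset.filter_true_of_mem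
      fun m hm => hle m (Finset.mem_range.1 hm), Finset.card_range]
  · rw [addF_censor G hret hmax, addF, Finset.filter_true_of_mem
      fun m hm => hle m (Finset.mem_range.1 hm)]

theorem tendsto_hitTime_censor (hret : ∃ k, 1 ≤ k ∧ ω k = j) :
    Tendsto (fun n => hitTime j (censor n ω)) atTop (𝓝 (hitTime j ω)) :=
  tendsto_const_nhds.congr' <| (eventually_censor_eq hret).mono fun _ h => h.1.symm

theorem tendsto_addF_censor (G : ℕ → ℝ) (hret : ∃ k, 1 ≤ k ∧ ω k = j) :
    Tendsto (fun n => addF G j (censor n ω)) atTop (𝓝 (addF G j ω)) :=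
  tendsto_const_nhds.congr' <| (eventually_censor_eq hret).mono fun _ h => (h.2 G).symm

end Censor

theorem MCChainLaw.ae_apply_zero {P : ℕ → ℕ → ℝ} {μ : ℕ → Measure (ℕ → ℕ)}
    (hchain : MCChainLaw P μ) (i : ℕ) : ∀ᵐ ω ∂μ i, ω 0 = i := by
  have := hchain.1 i
  have hmeas : MeasurableSet {ω : ℕ → ℕ | ω 0 = i} := by measurability
  refine (mem_ae_iff_prob_eq_one hmeas).2 ?_
  simpa using hchain.2 i 0 (fun _ => i) rfl

theorem ae_exists_return {μ : Measure (ℕ → ℕ)} [IsProbabilityMeasure μ] {j : ℕ}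
    (hrec : μ {ω | ∃ k, 1 ≤ k ∧ ω k = j} = 1) : ∀ᵐ ω ∂μ, ∃ k, 1 ≤ k ∧ ω k = j :=
  (mem_ae_iff_prob_eq_one (by measurability)).2 hrec

theorem censored_additive_functionals_monotone_general
    (P : ℕ → ℕ → ℝ) (μ : ℕ → Measure (ℕ → ℕ)) (g : ℕ → ℝ) (j : ℕ)
    (hchain : MCChainLaw P μ)
    (hrec : ∀ i j', μ i {ω | ∃ k, 1 ≤ k ∧ ω k = j'} = 1) :
    ∀ i, ∀ᵐ ω ∂ μ i,
      ((∀ n, max i j ≤ n →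
        addF (fun x => |g x|) j (censor n ω) ≤ addF (fun x => |g x|) j (censor (n + 1) ω) ∧
        addF (fun x => |g x|) j (censor (n + 1) ω) ≤ addF (fun x => |g x|) j ω) ∧
      Tendsto (fun n => addF (fun x => |g x|) j (censor n ω)) atTop
        (𝓝 (addF (fun x => |g x|) j ω))) ∧
      ((∀ n, max i j ≤ n →
        hitTime j (censor n ω) ≤ hitTime j (censor (n + 1) ω) ∧
        hitTime j (censor (n + 1) ω) ≤ hitTime j ω) ∧
      Tendsto (fun n => hitTime j (censor n ω)) atTop (𝓝 (hitTime j ω))) := by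
  intro i
  have := hchain.1 i
  filter_upwards [hchain.ae_apply_zero i, ae_exists_return (hrec i j)] with ω h0 hret
  subst h0
  have hG : ∀ x, 0 ≤ |g x| := fun x => abs_nonneg (g x)
  exact ⟨⟨fun n hn => ⟨addF_censor_mono hG hret hn n.le_succ,
      addF_censor_le hG hret (hn.trans n.le_succ)⟩, tendsto_addF_censor _ hret⟩,
    ⟨fun n hn => ⟨hitTime_censor_mono hret hn n.le_succ,
      hitTime_censor_le hret (hn.trans n.le_succ)⟩, tendsto_hitTime_censor hret⟩⟩

/-- For the censored chain of an irreducible recurrent DTMC, the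
additive functionals of `|g|` are monotone and convergent along almost every sample path:
`_{(n)}ζ_j(|g|)(ω) ≤ _{(n+1)}ζ_j(|g|)(ω) ≤ ζ_j(|g|)(ω)` and
`_{(n)}ζ_j(|g|)(ω) → ζ_j(|g|)(ω)`; together with the monotone convergence of the first
return times this says Assumption 1 holds for censored truncations. -/
theorem censored_additive_functionals_monotone
    (P : ℕ → ℕ → ℝ) (μ : ℕ → Measure (ℕ → ℕ)) (g : ℕ → ℝ) (j : ℕ)
    (hP : MCStochastic P) (hirr : MCIrreducible P) (hchain : MCChainLaw P μ)
    (hrec : ∀ i j', μ i {ω | ∃ k, 1 ≤ k ∧ ω k = j'} = 1) :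
    ∀ i, ∀ᵐ ω ∂ μ i,
      ((∀ n, max i j ≤ n →
        addF (fun x => |g x|) j (censor n ω) ≤ addF (fun x => |g x|) j (censor (n + 1) ω) ∧
        addF (fun x => |g x|) j (censor (n + 1) ω) ≤ addF (fun x => |g x|) j ω) ∧
      Tendsto (fun n => addF (fun x => |g x|) j (censor n ω)) atTop
        (𝓝 (addF (fun x => |g x|) j ω))) ∧
      ((∀ n, max i j ≤ n →
        hitTime j (censor n ω) ≤ hitTime j (censor (n + 1) ω) ∧
        hitTime j (censor (n + 1) ω) ≤ hitTime j ω) ∧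
      Tendsto (fun n => hitTime j (censor n ω)) atTop (𝓝 (hitTime j ω))) :=
  censored_additive_functionals_monotone_general P μ g j hchain hrec
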